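/- Fix b, d > 0 and for α, κ > 0 define φ_α(κ, x) := (κ²/(κ² + αb))·x if |x| ≤ dα/κ, and φ_α(κ, x) := x − sign(x)·dbα²/(κ(κ² + αb)) otherwise. Then (φ_α)_{α>0} is a non-linear regularizing filter and satisfies Assumption B; in particular (B2) holds with the constants d and e := 1/(2√b): for all κ, α > 0 and x ∈ ℝ, |x| ≤ dα/κ implies |φ_α(κ, x)| ≤ (eκ/√α)·|x|, and (B1) holds: for every κ > 0 and x ∈ ℝ, α ↦ |φ_α(κ, x)| is monotonically increasing as α decreases to 0. -/
import Mathlib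


open Filter

noncomputable section

/-- A non-linear regularizing filter: `φ α κ` is (F1) monotone, (F2) nonexpansive,
(F3) zero at zero, and (F4) converges pointwise to the identity as `α → 0`. -/
def IsRegFilter (φ : ℝ → ℝ → ℝ → ℝ) : Prop :=
  (∀ α > (0 : ℝ), ∀ κ > (0 : ℝ), Monotone (φ α κ)) ∧
  (∀ α > (0 : ℝ), ∀ κ > (0 : ℝ), ∀ x y : ℝ, |φ α κ x - φ α κ y| ≤ |x - y|) ∧
  (∀ α > (0 : ℝ), ∀ κ > (0 : ℝ), φ α κ 0 = 0) ∧
  (∀ κ > (0 : ℝ), ∀ c : ℝ,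
    Tendsto (fun α => φ α κ c) (nhdsWithin 0 (Set.Ioi 0)) (nhds c))

/-- Assumption B: (B1) `α ↦ |φ_α(κ,x)|` increases as `α` decreases, and (B2) there are
`d, e > 0` with `|φ_α(κ,x)| ≤ (eκ/√α)·|x|` whenever `|x| ≤ dα/κ`. -/
def AssumptionB (φ : ℝ → ℝ → ℝ → ℝ) : Prop :=
  (∀ κ > (0 : ℝ), ∀ x : ℝ, ∀ α β : ℝ, 0 < α → α ≤ β → |φ β κ x| ≤ |φ α κ x|) ∧
  (∃ d > (0 : ℝ), ∃ e > (0 : ℝ), ∀ κ > (0 : ℝ), ∀ α > (0 : ℝ), ∀ x : ℝ,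
    |x| ≤ d * α / κ → |φ α κ x| ≤ e * κ / Real.sqrt α * |x|)

/-- The filter of Example `caseB` (non-stationary Huber-type filter). -/
noncomputable def phiB (b d α κ x : ℝ) : ℝ :=
  if |x| ≤ d * α / κ then κ ^ 2 / (κ ^ 2 + α * b) * x
  else x - Real.sign x * (d * b * α ^ 2 / (κ * (κ ^ 2 + α * b)))

private lemma clamp_sub_le {t x y : ℝ} (h : x ≤ y) :
    max (-t) (min y t) - max (-t) (min x t) ≤ y - x ∧
    0 ≤ max (-t) (min y t) - max (-t) (min x t) := by
  constructor <;> (simp only [max_def, min_def]; split_ifs <;> linarith)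

private lemma clamp_neg {t x : ℝ} (ht : 0 ≤ t) :
    max (-t) (min (-x) t) = -max (-t) (min x t) := by
  simp only [max_def, min_def]; split_ifs <;> linarith

private lemma clamp_abs_le {t x : ℝ} (ht : 0 ≤ t) :
    |max (-t) (min x t)| ≤ |x| := by
  rcases le_total 0 x with hx | hx
  · rw [abs_of_nonneg hx, abs_of_nonneg (le_max_of_le_right (le_min hx ht))]
    exact max_le (by linarith) (min_le_left _ _)
  · rw [abs_of_nonpos hx, min_eq_left (by linarith), abs_of_nonpos (max_le (by linarith) hx)]
    simp

private lemma phiB_eq (b d α κ x : ℝ) (hb : 0 < b) (hd : 0 < d) (hα : 0 < α) (hκ : 0 < κ) :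
    phiB b d α κ x =
      x - (α * b / (κ ^ 2 + α * b)) * max (-(d * α / κ)) (min x (d * α / κ)) := by
  have ht : 0 < d * α / κ := by positivity
  have hden : 0 < κ ^ 2 + α * b := by positivity
  unfold phiB
  split_ifs with h
  · rw [abs_le] at h
    rw [min_eq_left h.2, max_eq_right h.1]
    field_simp; ring
  · push_neg at h
    rcases lt_or_ge 0 x with hx | hx
    · rw [abs_of_pos hx] at h
      rw [min_eq_right h.le, max_eq_right (by linarith), Real.sign_of_pos hx]
      field_simp
    · have hx' : x < 0 := hx.lt_of_ne (by rintro rfl; simp at h; linarith)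
      rw [abs_of_neg hx'] at h
      rw [min_eq_left (by linarith), max_eq_left (by linarith), Real.sign_of_neg hx']
      field_simp

private lemma phiB_odd (b d α κ x : ℝ) (hb : 0 < b) (hd : 0 < d) (hα : 0 < α) (hκ : 0 < κ) :
    phiB b d α κ (-x) = -phiB b d α κ x := by
  have ht : 0 ≤ d * α / κ := by positivity
  rw [phiB_eq b d α κ (-x) hb hd hα hκ, phiB_eq b d α κ x hb hd hα hκ, clamp_neg ht]
  ring

private lemma phiB_lip (b d α κ x y : ℝ) (hb : 0 < b) (hd : 0 < d) (hα : 0 < α) (hκ : 0 < κ)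
    (hxy : x ≤ y) :
    0 ≤ phiB b d α κ y - phiB b d α κ x ∧ phiB b d α κ y - phiB b d α κ x ≤ y - x := by
  have hden : 0 < κ ^ 2 + α * b := by positivity
  have hlam0 : 0 ≤ α * b / (κ ^ 2 + α * b) := by positivity
  have hlam1 : α * b / (κ ^ 2 + α * b) ≤ 1 := by
    rw [div_le_one hden]; nlinarith
  obtain ⟨h1, h2⟩ := clamp_sub_le (t := d * α / κ) hxy
  rw [phiB_eq b d α κ x hb hd hα hκ, phiB_eq b d α κ y hb hd hα hκ]
  constructor
  · nlinarith
  · nlinarith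

private lemma phiB_B1_nonneg (b d κ x α β : ℝ) (hb : 0 < b) (hd : 0 < d) (hκ : 0 < κ)
    (hx : 0 ≤ x) (hα : 0 < α) (hαβ : α ≤ β) :
    |phiB b d β κ x| ≤ |phiB b d α κ x| := by
  have hβ : 0 < β := hα.trans_le hαβ
  have hdenα : 0 < κ ^ 2 + α * b := by positivity
  have hdenβ : 0 < κ ^ 2 + β * b := by positivity
  have hmα : (0:ℝ) ≤ min x (d * α / κ) := le_min hx (by positivity)
  have hmβ : (0:ℝ) ≤ min x (d * β / κ) := le_min hx (by positivity)
  have htα : (0:ℝ) ≤ d * α / κ := by positivity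
  have htβ : (0:ℝ) ≤ d * β / κ := by positivity
  rw [phiB_eq b d α κ x hb hd hα hκ, phiB_eq b d β κ x hb hd hβ hκ,
    max_eq_right (by linarith : -(d * α / κ) ≤ min x (d * α / κ)),
    max_eq_right (by linarith : -(d * β / κ) ≤ min x (d * β / κ))]
  have hm : min x (d * α / κ) ≤ min x (d * β / κ) := by
    apply min_le_min le_rfl
    gcongr
  have hl : α * b / (κ ^ 2 + α * b) ≤ β * b / (κ ^ 2 + β * b) := by
    rw [div_le_div_iff₀ hdenα hdenβ]
    nlinarith [mul_nonneg (mul_nonneg hb.le (sq_nonneg κ)) (sub_nonneg.2 hαβ)]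
  have hlamβ1 : β * b / (κ ^ 2 + β * b) ≤ 1 := by
    rw [div_le_one hdenβ]; nlinarith
  have hlamα0 : 0 ≤ α * b / (κ ^ 2 + α * b) := by positivity
  have hlamβ0 : 0 ≤ β * b / (κ ^ 2 + β * b) := by positivity
  have h1 : α * b / (κ ^ 2 + α * b) * min x (d * α / κ) ≤
      β * b / (κ ^ 2 + β * b) * min x (d * β / κ) := mul_le_mul hl hm hmα hlamβ0
  have h2 : β * b / (κ ^ 2 + β * b) * min x (d * β / κ) ≤ x := by
    calc β * b / (κ ^ 2 + β * b) * min x (d * β / κ) ≤ 1 * min x (d * β / κ) :=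
          mul_le_mul_of_nonneg_right hlamβ1 hmβ
      _ ≤ x := by rw [one_mul]; exact min_le_left _ _
  rw [abs_of_nonneg (by linarith), abs_of_nonneg (by linarith)]
  linarith

/-- The family `(phiB b d α)_{α>0}` is a non-linear regularizing filter
satisfying Assumption B; (B1) holds, and (B2) holds with the constants `d` and
`e = 1/(2√b)`. -/
theorem statement18 (b d : ℝ) (hb : 0 < b) (hd : 0 < d) :
    IsRegFilter (phiB b d) ∧
    (∀ κ > (0 : ℝ), ∀ x : ℝ, ∀ α β : ℝ, 0 < α → α ≤ β →
      |phiB b d β κ x| ≤ |phiB b d α κ x|) ∧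
    (∀ κ > (0 : ℝ), ∀ α > (0 : ℝ), ∀ x : ℝ, |x| ≤ d * α / κ →
      |phiB b d α κ x| ≤ (1 / (2 * Real.sqrt b)) * κ / Real.sqrt α * |x|) := by
  refine ⟨⟨?_, ?_, ?_, ?_⟩, ?_, ?_⟩
  · -- F1 monotone
    intro α hα κ hκ x y hxy
    have := (phiB_lip b d α κ x y hb hd hα hκ hxy).1
    linarith
  · -- F2 nonexpansive
    intro α hα κ hκ x y
    rcases le_total x y with h | h
    · obtain ⟨h1, h2⟩ := phiB_lip b d α κ x y hb hd hα hκ h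
      rw [abs_sub_comm, abs_of_nonneg h1, abs_sub_comm x, abs_of_nonneg (by linarith)]
      linarith
    · obtain ⟨h1, h2⟩ := phiB_lip b d α κ y x hb hd hα hκ h
      rw [abs_of_nonneg h1, abs_of_nonneg (by linarith)]
      linarith
  · -- F3 zero
    intro α hα κ hκ
    unfold phiB
    rw [if_pos (by rw [abs_zero]; positivity)]
    ring
  · -- F4 tendsto
    intro κ hκ c
    rw [← tendsto_sub_nhds_zero_iff]
    have hg : Tendsto (fun α : ℝ => b * |c| / κ ^ 2 * α) (nhdsWithin 0 (Set.Ioi 0)) (nhds 0) := by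
      have h0 : Tendsto (fun α : ℝ => b * |c| / κ ^ 2 * α) (nhds 0) (nhds 0) := by
        have h1 : Tendsto (fun α : ℝ => α) (nhds 0) (nhds 0) := fun s hs => hs
        have := h1.const_mul (b * |c| / κ ^ 2)
        simpa using this
      exact h0.mono_left nhdsWithin_le_nhds
    apply squeeze_zero_norm' _ hg
    · filter_upwards [self_mem_nhdsWithin] with α hα
      have hα : (0:ℝ) < α := hα
      have ht : (0:ℝ) ≤ d * α / κ := by positivity
      have hden : 0 < κ ^ 2 + α * b := by positivity
      have hlam0 : 0 ≤ α * b / (κ ^ 2 + α * b) := by positivity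
      have heq : phiB b d α κ c - c =
          -(α * b / (κ ^ 2 + α * b) * max (-(d * α / κ)) (min c (d * α / κ))) := by
        rw [phiB_eq b d α κ c hb hd hα hκ]; ring
      rw [Real.norm_eq_abs, heq, abs_neg, abs_mul, abs_of_nonneg hlam0]
      calc α * b / (κ ^ 2 + α * b) * |max (-(d * α / κ)) (min c (d * α / κ))| ≤
            α * b / (κ ^ 2 + α * b) * |c| :=
          mul_le_mul_of_nonneg_left (clamp_abs_le ht) hlam0
        _ ≤ α * b / κ ^ 2 * |c| := by
            apply mul_le_mul_of_nonneg_right _ (abs_nonneg c)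
            gcongr
            nlinarith
        _ = b * |c| / κ ^ 2 * α := by ring
  · -- B1
    intro κ hκ x α β hα hαβ
    rcases le_total 0 x with hx | hx
    · exact phiB_B1_nonneg b d κ x α β hb hd hκ hx hα hαβ
    · have hβ : 0 < β := hα.trans_le hαβ
      have h1 : phiB b d β κ x = -phiB b d β κ (-x) := by
        rw [phiB_odd b d β κ x hb hd hβ hκ, neg_neg]
      have h2 : phiB b d α κ x = -phiB b d α κ (-x) := by
        rw [phiB_odd b d α κ x hb hd hα hκ, neg_neg]
      rw [h1, h2, abs_neg, abs_neg]
      exact phiB_B1_nonneg b d κ (-x) α β hb hd hκ (by linarith) hα hαβ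
  · -- B2
    intro κ hκ α hα x hx
    have hden : 0 < κ ^ 2 + α * b := by positivity
    have hsa : (0:ℝ) < Real.sqrt α := Real.sqrt_pos.2 hα
    have hsb : (0:ℝ) < Real.sqrt b := Real.sqrt_pos.2 hb
    have hα' : Real.sqrt α ^ 2 = α := Real.sq_sqrt hα.le
    have hb' : Real.sqrt b ^ 2 = b := Real.sq_sqrt hb.le
    have main : κ ^ 2 / (κ ^ 2 + α * b) ≤ 1 / (2 * Real.sqrt b) * κ / Real.sqrt α := by
      rw [div_le_div_iff₀ hden hsa]
      have h1 : 1 / (2 * Real.sqrt b) * κ * (κ ^ 2 + α * b) =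
          κ * (κ ^ 2 + α * b) / (2 * Real.sqrt b) := by ring
      rw [h1, le_div_iff₀ (by positivity)]
      have hab : Real.sqrt α * Real.sqrt b * (Real.sqrt α * Real.sqrt b) = α * b := by
        rw [show Real.sqrt α * Real.sqrt b * (Real.sqrt α * Real.sqrt b) =
          Real.sqrt α ^ 2 * Real.sqrt b ^ 2 from by ring, hα', hb']
      have key : 2 * Real.sqrt b * Real.sqrt α * κ ≤ κ ^ 2 + α * b := by
        nlinarith [sq_nonneg (κ - Real.sqrt α * Real.sqrt b), hab]
      nlinarith [mul_le_mul_of_nonneg_left key hκ.le]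
    unfold phiB
    rw [if_pos hx, abs_mul, abs_of_nonneg (by positivity : (0:ℝ) ≤ κ ^ 2 / (κ ^ 2 + α * b))]
    exact mul_le_mul_of_nonneg_right main (abs_nonneg x)
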